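/- Let G be a connected triangle-free graph on n vertices and m edges with PI_w(G) = n²m. Then G is a complete bipartite graph K_{a,b} with a + b = n. -/

import Mathlib

open Finset
open scoped Classical

/-- Number of vertices strictly closer to `u` than to `v`. -/
noncomputable def ncl {V : Type*} [Fintype V] (G : SimpleGraph V) (u v : V) : ℕ :=
  (Finset.univ.filter fun x => G.dist x u < G.dist x v).card

/-- Weighted vertex PI index: each edge `uv` contributes
`(deg u + deg v) * (n_u(e) + n_v(e))`; each edge is counted twice in the double sum. -/
noncomputable def PIw {V : Type*} [Fintype V] (G : SimpleGraph V) : ℝ :=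
  (∑ u, ∑ v, if G.Adj u v then
    (((G.degree u + G.degree v : ℕ) : ℝ) * ((ncl G u v + ncl G v u : ℕ) : ℝ)) else 0) / 2

/-!
In a triangle-free graph the neighbourhoods of the two ends of an edge `uv` are
disjoint, so `deg u + deg v ≤ n`; trivially `n_u(e) + n_v(e) ≤ n`. Hence every edge contributes at
most `n²` to `PI_w`, and `PI_w = n²m` forces `deg u + deg v = n` on every edge, i.e. the
neighbourhoods of adjacent vertices are complementary. Fixing one edge `u₀v₀`, every vertex is
adjacent to exactly the vertices outside its own side of the partition `N(v₀) ⊔ N(u₀)`.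
-/

theorem Nat.eq_of_le_of_le_of_mul_eq_sq {a b n : ℕ} (ha : a ≤ n) (hb : b ≤ n) (h : a * b = n ^ 2) :
    a = n := by
  by_contra hne
  have : a * b < n * n := Nat.mul_lt_mul_of_lt_of_le (lt_of_le_of_ne ha hne) hb (by omega)
  nlinarith

namespace SimpleGraph

variable {V : Type*} [Fintype V] {G : SimpleGraph V}

theorem CliqueFree.disjoint_neighborFinset (htf : G.CliqueFree 3) {u v : V} (h : G.Adj u v) :
    Disjoint (G.neighborFinset u) (G.neighborFinset v) := by
  rw [Finset.disjoint_left]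
  intro x hxu hxv
  rw [mem_neighborFinset] at hxu hxv
  exact htf {u, v, x} (is3Clique_triple_iff.mpr ⟨h, hxu, hxv⟩)

theorem CliqueFree.degree_add_degree_le_card (htf : G.CliqueFree 3) {u v : V} (h : G.Adj u v) :
    G.degree u + G.degree v ≤ Fintype.card V := by
  rw [← card_neighborFinset_eq_degree, ← card_neighborFinset_eq_degree,
    ← card_union_of_disjoint (htf.disjoint_neighborFinset h)]
  exact card_le_univ _

theorem CliqueFree.neighborFinset_eq_compl (htf : G.CliqueFree 3) {u v : V} (h : G.Adj u v)
    (hdeg : G.degree u + G.degree v = Fintype.card V) :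
    G.neighborFinset v = (G.neighborFinset u)ᶜ := by
  refine eq_of_subset_of_card_le
    (subset_compl_iff_disjoint_left.mpr (htf.disjoint_neighborFinset h)) ?_
  rw [card_compl, card_neighborFinset_eq_degree, card_neighborFinset_eq_degree]
  omega

theorem ncl_add_ncl_le_card (u v : V) : ncl G u v + ncl G v u ≤ Fintype.card V := by
  rw [ncl, ncl, ← card_union_of_disjoint (disjoint_filter.mpr fun _ _ h => h.not_gt)]
  exact card_le_univ _

theorem sum_sum_ite_adj {R : Type*} [Semiring R] (c : R) :
    ∑ u, ∑ v, (if G.Adj u v then c else 0) = 2 * #G.edgeFinset * c := by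
  have hrow (u : V) : ∑ v, (if G.Adj u v then c else 0) = G.degree u * c := by
    rw [← sum_filter, ← neighborFinset_eq_filter, sum_const, card_neighborFinset_eq_degree,
      nsmul_eq_mul]
  simp_rw [hrow, ← sum_mul]
  exact_mod_cast congrArg (fun k : ℕ => (k : R) * c) (sum_degrees_eq_twice_card_edges G)

theorem CliqueFree.degree_add_degree_eq_card_of_PIw_eq (htf : G.CliqueFree 3)
    (heq : PIw G = (Fintype.card V : ℝ) ^ 2 * #G.edgeFinset) {u v : V} (h : G.Adj u v) :
    G.degree u + G.degree v = Fintype.card V := by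
  let f : V → V → ℝ := fun a b => if G.Adj a b then
    ((G.degree a + G.degree b : ℕ) : ℝ) * ((ncl G a b + ncl G b a : ℕ) : ℝ) else 0
  let g : V → V → ℝ := fun a b => if G.Adj a b then (Fintype.card V : ℝ) ^ 2 else 0
  have hle (p : V × V) : f p.1 p.2 ≤ g p.1 p.2 := by
    obtain ⟨a, b⟩ := p
    by_cases hab : G.Adj a b
    · simp only [f, g, hab, if_true, sq]
      exact mul_le_mul (mod_cast htf.degree_add_degree_le_card hab)
        (mod_cast ncl_add_ncl_le_card a b) (by positivity) (by positivity)
    · simp [f, g, hab]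
  have hsum : ∑ p : V × V, f p.1 p.2 = ∑ p : V × V, g p.1 p.2 := by
    have hPIw : PIw G = (∑ u, ∑ v, f u v) / 2 := rfl
    rw [Fintype.sum_prod_type', Fintype.sum_prod_type', sum_sum_ite_adj]
    linarith
  have huv := (sum_eq_sum_iff_of_le fun p _ => hle p).mp hsum (u, v) (mem_univ _)
  simp only [f, g, h, if_true] at huv
  exact Nat.eq_of_le_of_le_of_mul_eq_sq (htf.degree_add_degree_le_card h)
    (ncl_add_ncl_le_card u v) (mod_cast huv)

theorem CliqueFree.adj_iff_mem_neighborFinset_iff_notMem (htf : G.CliqueFree 3)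
    (hdeg : ∀ u v, G.Adj u v → G.degree u + G.degree v = Fintype.card V)
    {u₀ v₀ : V} (h₀ : G.Adj u₀ v₀) (x y : V) :
    G.Adj x y ↔ (x ∈ G.neighborFinset v₀ ↔ y ∉ G.neighborFinset v₀) := by
  have hcompl {u v : V} (h : G.Adj u v) : G.neighborFinset v = (G.neighborFinset u)ᶜ :=
    htf.neighborFinset_eq_compl h (hdeg u v h)
  rw [← mem_neighborFinset G x y]
  by_cases hx : x ∈ G.neighborFinset v₀
  · rw [hcompl ((G.mem_neighborFinset v₀ x).mp hx), mem_compl]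
    simp only [hx, true_iff]
  · have hxu₀ : x ∈ G.neighborFinset u₀ := by rwa [hcompl h₀.symm, mem_compl]
    rw [hcompl ((G.mem_neighborFinset u₀ x).mp hxu₀), hcompl h₀.symm, compl_compl]
    simp only [hx, false_iff, not_not]

theorem exists_iso_completeBipartiteGraph_of_adj_iff (p : V → Prop)
    (hp : ∀ x y, G.Adj x y ↔ (p x ↔ ¬p y)) :
    ∃ a b : ℕ, a + b = Fintype.card V ∧
      Nonempty (G ≃g completeBipartiteGraph (Fin a) (Fin b)) := by
  let e : V ≃ {x // p x} ⊕ {x // ¬p x} := (Equiv.sumCompl p).symm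
  have hleft (x : V) : (e x).isLeft ↔ p x := by
    by_cases hx : p x
    · simp [e, Equiv.sumCompl_symm_apply_of_pos hx, hx]
    · simp [e, Equiv.sumCompl_symm_apply_of_neg hx, hx]
  let iso : G ≃g completeBipartiteGraph {x // p x} {x // ¬p x} :=
    ⟨e, fun {x y} => by
      simp only [completeBipartiteGraph_adj, ← Sum.not_isLeft, hleft, hp]
      tauto⟩
  refine ⟨_, _, ?_, ⟨iso.trans
    (completeBipartiteGraphCongr (Fintype.equivFin _) (Fintype.equivFin _))⟩⟩
  rw [← Fintype.card_sum, Fintype.card_congr e]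

end SimpleGraph

theorem PIw_eq_n2m_iff_completeBipartite_general {V : Type*} [Fintype V] (G : SimpleGraph V)
    (htf : G.CliqueFree 3)
    (heq : PIw G = (Fintype.card V : ℝ) ^ 2 * (G.edgeFinset.card : ℝ)) :
    ∃ a b : ℕ, a + b = Fintype.card V ∧
      Nonempty (G ≃g completeBipartiteGraph (Fin a) (Fin b)) := by
  by_cases hedge : ∃ u v, G.Adj u v
  · obtain ⟨u₀, v₀, h₀⟩ := hedge
    exact SimpleGraph.exists_iso_completeBipartiteGraph_of_adj_iff (· ∈ G.neighborFinset v₀)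
      (htf.adj_iff_mem_neighborFinset_iff_notMem
        (fun _ _ => htf.degree_add_degree_eq_card_of_PIw_eq heq) h₀)
  · push Not at hedge
    exact SimpleGraph.exists_iso_completeBipartiteGraph_of_adj_iff (fun _ => False)
      (fun x y => by simp [hedge x y])

theorem PIw_eq_n2m_iff_completeBipartite {V : Type*} [Fintype V] (G : SimpleGraph V)
    (hconn : G.Connected) (htf : G.CliqueFree 3)
    (heq : PIw G = (Fintype.card V : ℝ) ^ 2 * (G.edgeFinset.card : ℝ)) :
    ∃ a b : ℕ, a + b = Fintype.card V ∧
      Nonempty (G ≃g completeBipartiteGraph (Fin a) (Fin b)) :=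
  PIw_eq_n2m_iff_completeBipartite_general G htf heq
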